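/- arXiv:2103.16077 — 8 statements merged into one kernel-verified Lean document; each statement's English description precedes it below -/
import Mathlib

section
/- For a hyperbolic triangle with side lengths d_jk, d_ik, d_ij and opposite angles α_i, α_j, α_k, one has cosh(d_jk/2)·cosh(d_ik/2)·sin α_k = cosh(d_ij/2)·cos((α_i+α_j−α_k)/2). -/
open Real

set_option maxHeartbeats 1000000 in
/-- For a hyperbolic triangle with side lengths `djk, dik, dij` and opposite angles
`αi, αj, αk`, one has
`cosh(djk/2)·cosh(dik/2)·sin αk = cosh(dij/2)·cos((αi+αj−αk)/2)`. -/
theorem stmt1 (djk dik dij αi αj αk : ℝ)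
    (hdjk : 0 < djk) (hdik : 0 < dik) (hdij : 0 < dij)
    (htri1 : djk < dik + dij) (htri2 : dik < djk + dij) (htri3 : dij < djk + dik)
    (hαi : αi ∈ Set.Ioo 0 π) (hαj : αj ∈ Set.Ioo 0 π) (hαk : αk ∈ Set.Ioo 0 π)
    (hsum : αi + αj + αk < π)
    (hcosi : Real.cosh djk = (Real.cos αi + Real.cos αj * Real.cos αk) /
      (Real.sin αj * Real.sin αk))
    (hcosj : Real.cosh dik = (Real.cos αj + Real.cos αk * Real.cos αi) /
      (Real.sin αk * Real.sin αi))
    (hcosk : Real.cosh dij = (Real.cos αk + Real.cos αi * Real.cos αj) /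
      (Real.sin αi * Real.sin αj)) :
    Real.cosh (djk / 2) * Real.cosh (dik / 2) * Real.sin αk =
      Real.cosh (dij / 2) * Real.cos ((αi + αj - αk) / 2) := by
  have hsi : 0 < Real.sin αi := Real.sin_pos_of_pos_of_lt_pi hαi.1 hαi.2
  have hsj : 0 < Real.sin αj := Real.sin_pos_of_pos_of_lt_pi hαj.1 hαj.2
  have hsk : 0 < Real.sin αk := Real.sin_pos_of_pos_of_lt_pi hαk.1 hαk.2
  have hu : 0 < Real.cos ((αi + αj - αk) / 2) := by
    apply Real.cos_pos_of_mem_Ioo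
    constructor
    · nlinarith [hαk.2, hαi.1, hαj.1]
    · nlinarith [hsum, hαk.1]
  have hL : 0 < Real.cosh (djk / 2) * Real.cosh (dik / 2) * Real.sin αk := by
    positivity
  have hR : 0 < Real.cosh (dij / 2) * Real.cos ((αi + αj - αk) / 2) :=
    mul_pos (Real.cosh_pos _) hu
  have hch : ∀ x : ℝ, 2 * Real.cosh (x / 2) ^ 2 = Real.cosh x + 1 := by
    intro x
    have h := Real.cosh_two_mul (x / 2)
    have h2 : Real.sinh (x / 2) ^ 2 = Real.cosh (x / 2) ^ 2 - 1 := by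
      have := Real.cosh_sq (x / 2); linarith
    rw [show 2 * (x / 2) = x by ring] at h
    rw [h2] at h
    linarith
  have h4 : 2 * Real.cos ((αi + αj - αk) / 2) ^ 2 = 1 + Real.cos (αi + αj - αk) := by
    have := Real.cos_sq ((αi + αj - αk) / 2)
    rw [show 2 * ((αi + αj - αk) / 2) = αi + αj - αk by ring] at this
    linarith
  have hexp : Real.cos (αi + αj - αk) =
      (Real.cos αi * Real.cos αj - Real.sin αi * Real.sin αj) * Real.cos αk +
      (Real.sin αi * Real.cos αj + Real.cos αi * Real.sin αj) * Real.sin αk := by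
    rw [Real.cos_sub, Real.cos_add, Real.sin_add]
  have hpi : Real.sin αi ^ 2 = 1 - Real.cos αi ^ 2 := by
    have := Real.sin_sq_add_cos_sq αi; linarith
  have hpj : Real.sin αj ^ 2 = 1 - Real.cos αj ^ 2 := by
    have := Real.sin_sq_add_cos_sq αj; linarith
  have hpk : Real.sin αk ^ 2 = 1 - Real.cos αk ^ 2 := by
    have := Real.sin_sq_add_cos_sq αk; linarith
  set ci := Real.cos αi; set cj := Real.cos αj; set ck := Real.cos αk
  set si := Real.sin αi; set sj := Real.sin αj; set sk := Real.sin αk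
  have key : (ci + cj * ck + sj * sk) * (cj + ci * ck + si * sk) =
      (ck + ci * cj + si * sj) *
        (1 + (ci * cj - si * sj) * ck + (si * cj + ci * sj) * sk) := by
    linear_combination (ck * sj ^ 2 - cj * sj * sk) * hpi +
      (ck - ci * si * sk - ci ^ 2 * ck) * hpj + (si * sj) * hpk
  have hA : (Real.cosh (djk / 2) * Real.cosh (dik / 2) * sk) ^ 2 * (4 * si * sj) =
      (ci + cj * ck + sj * sk) * (cj + ci * ck + si * sk) := by
    have e1 := hch djk
    have e2 := hch dik
    rw [hcosi] at e1
    rw [hcosj] at e2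
    have : (Real.cosh (djk / 2) * Real.cosh (dik / 2) * sk) ^ 2 * (4 * si * sj) =
        (2 * Real.cosh (djk / 2) ^ 2) * (2 * Real.cosh (dik / 2) ^ 2) * sk ^ 2 * (si * sj) := by
      ring
    rw [this, e1, e2]
    field_simp
  have hB : (Real.cosh (dij / 2) * Real.cos ((αi + αj - αk) / 2)) ^ 2 * (4 * si * sj) =
      (ck + ci * cj + si * sj) *
        (1 + (ci * cj - si * sj) * ck + (si * cj + ci * sj) * sk) := by
    have e3 := hch dij
    rw [hcosk] at e3
    have : (Real.cosh (dij / 2) * Real.cos ((αi + αj - αk) / 2)) ^ 2 * (4 * si * sj) =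
        (2 * Real.cosh (dij / 2) ^ 2) * (2 * Real.cos ((αi + αj - αk) / 2) ^ 2) * (si * sj) := by
      ring
    rw [this, e3, h4, hexp]
    field_simp
    ring_nf
    try exact Or.inl trivial
  have hsq : (Real.cosh (djk / 2) * Real.cosh (dik / 2) * sk) ^ 2 =
      (Real.cosh (dij / 2) * Real.cos ((αi + αj - αk) / 2)) ^ 2 := by
    have h4sisj : (0:ℝ) < 4 * si * sj := by positivity
    have := hA.trans (key.trans hB.symm)
    exact mul_right_cancel₀ (ne_of_gt h4sisj) this
  nlinarith [hsq, hL, hR]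
end

section
/- For a hyperbolic triangle with side lengths d_jk, d_ik, d_ij and opposite angles α_i, α_j, α_k, one has 2·sin((α_i+α_j−α_k)/2)·cosh(d_ij/2) = (sinh²(d_jk/2) + sinh²(d_ik/2) − sinh²(d_ij/2))/(sinh(d_jk/2)·sinh(d_ik/2)). -/
/-!
Write the angles as `αi = q + r`, `αj = p + r`, `αk = p + q` and put `s = p + q + r`, which lies
in `(0, π/2)` because the angle sum is less than `π`. Sum-to-product turns the cosine rule into the
half-side formulas `sinh²(djk/2) = cos s · cos p / (sin αj sin αk)` (cyclically) and
`cosh²(dij/2) = cos p · cos q / (sin αi sin αj)`; taking positive square roots gives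
`sinh(djk/2) sinh(dik/2) = cos s · cosh(dij/2) / sin αk`. The claim then reduces to the
trigonometric identity `sin αi cos p + sin αj cos q - sin αk cos r = 2 sin r cos p cos q`.
-/

open Real

theorem Real.sinh_sq_half (x : ℝ) : sinh (x / 2) ^ 2 = (cosh x - 1) / 2 := by
  have h := cosh_two_mul (x / 2)
  rw [mul_div_cancel₀ x two_ne_zero, cosh_sq] at h
  linarith

theorem Real.cosh_sq_half (x : ℝ) : cosh (x / 2) ^ 2 = (cosh x + 1) / 2 := by
  have h := cosh_two_mul (x / 2)
  rw [mul_div_cancel₀ x two_ne_zero, sinh_sq] at h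
  linarith

theorem Real.cos_add_cos_mul_cos_sub_sin_mul_sin {a b c s t : ℝ}
    (hs : a + b + c = 2 * s) (ht : b + c - a = 2 * t) :
    cos a + cos b * cos c - sin b * sin c = 2 * cos s * cos t := by
  rw [add_sub_assoc, ← cos_add, cos_add_cos, show (a + (b + c)) / 2 = s by linarith,
    show (a - (b + c)) / 2 = -t by linarith, cos_neg]

theorem Real.cos_add_cos_mul_cos_add_sin_mul_sin {a b c s t : ℝ}
    (hs : a + b - c = 2 * s) (ht : a - b + c = 2 * t) :
    cos a + cos b * cos c + sin b * sin c = 2 * cos s * cos t := by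
  rw [add_assoc, ← cos_sub, cos_add_cos, show (a + (b - c)) / 2 = s by linarith,
    show (a - (b - c)) / 2 = t by linarith]

theorem sinh_sq_half_of_cosh_eq {a b c d s t : ℝ} (hs : a + b + c = 2 * s)
    (ht : b + c - a = 2 * t) (hbc : sin b * sin c ≠ 0)
    (hd : cosh d = (cos a + cos b * cos c) / (sin b * sin c)) :
    sinh (d / 2) ^ 2 = cos s * cos t / (sin b * sin c) := by
  rw [sinh_sq_half, hd, div_sub_one hbc, cos_add_cos_mul_cos_sub_sin_mul_sin hs ht]
  ring

theorem cosh_sq_half_of_cosh_eq {a b c d s t : ℝ} (hs : a + b - c = 2 * s)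
    (ht : a - b + c = 2 * t) (hbc : sin b * sin c ≠ 0)
    (hd : cosh d = (cos a + cos b * cos c) / (sin b * sin c)) :
    cosh (d / 2) ^ 2 = cos s * cos t / (sin b * sin c) := by
  rw [cosh_sq_half, hd, div_add_one hbc, cos_add_cos_mul_cos_add_sin_mul_sin hs ht]
  ring

theorem Real.sin_add_mul_cos_add_sin_add_mul_cos_sub_sin_add_mul_cos (p q r : ℝ) :
    sin (q + r) * cos p + sin (p + r) * cos q - sin (p + q) * cos r =
      2 * sin r * cos p * cos q := by
  simp only [sin_add]
  ring

theorem stmt2_general (djk dik dij αi αj αk : ℝ)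
    (hdjk : 0 < djk) (hdik : 0 < dik)
    (hαi : αi ∈ Set.Ioo 0 π) (hαj : αj ∈ Set.Ioo 0 π) (hαk : αk ∈ Set.Ioo 0 π)
    (hsum : αi + αj + αk < π)
    (hcosi : Real.cosh djk = (Real.cos αi + Real.cos αj * Real.cos αk) /
      (Real.sin αj * Real.sin αk))
    (hcosj : Real.cosh dik = (Real.cos αj + Real.cos αk * Real.cos αi) /
      (Real.sin αk * Real.sin αi))
    (hcosk : Real.cosh dij = (Real.cos αk + Real.cos αi * Real.cos αj) /
      (Real.sin αi * Real.sin αj)) :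
    2 * Real.sin ((αi + αj - αk) / 2) * Real.cosh (dij / 2) =
      (Real.sinh (djk / 2) ^ 2 + Real.sinh (dik / 2) ^ 2 - Real.sinh (dij / 2) ^ 2) /
        (Real.sinh (djk / 2) * Real.sinh (dik / 2)) := by
  obtain ⟨p, q, r, rfl, rfl, rfl⟩ : ∃ p q r, αi = q + r ∧ αj = p + r ∧ αk = p + q :=
    ⟨(αj + αk - αi) / 2, (αi + αk - αj) / 2, (αi + αj - αk) / 2, by ring, by ring, by ring⟩
  rw [show (q + r + (p + r) - (p + q)) / 2 = r by ring]
  have hsi : 0 < sin (q + r) := sin_pos_of_pos_of_lt_pi hαi.1 hαi.2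
  have hsj : 0 < sin (p + r) := sin_pos_of_pos_of_lt_pi hαj.1 hαj.2
  have hsk : 0 < sin (p + q) := sin_pos_of_pos_of_lt_pi hαk.1 hαk.2
  have hcos : 0 < cos (p + q + r) :=
    cos_pos_of_mem_Ioo ⟨by linarith [pi_pos, hαi.1, hαj.1, hαk.1], by linarith⟩
  have hsinh_jk := sinh_sq_half_of_cosh_eq (s := p + q + r) (t := p) (by ring) (by ring)
    (by positivity) hcosi
  have hsinh_ik := sinh_sq_half_of_cosh_eq (s := p + q + r) (t := q) (by ring) (by ring)
    (by positivity) hcosj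
  have hsinh_ij := sinh_sq_half_of_cosh_eq (s := p + q + r) (t := r) (by ring) (by ring)
    (by positivity) hcosk
  have hcosh_ij := cosh_sq_half_of_cosh_eq (s := q) (t := p) (by ring) (by ring)
    (by positivity) hcosk
  have hsjk : 0 < sinh (djk / 2) := sinh_pos_iff.2 (half_pos hdjk)
  have hsik : 0 < sinh (dik / 2) := sinh_pos_iff.2 (half_pos hdik)
  have hprod :
      sinh (djk / 2) * sinh (dik / 2) = cos (p + q + r) * cosh (dij / 2) / sin (p + q) := by
    rw [← pow_left_inj₀ (by positivity) (by positivity) two_ne_zero, mul_pow, hsinh_jk,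
      hsinh_ik, div_pow, mul_pow, hcosh_ij]
    field_simp
  rw [eq_div_iff (by positivity), hprod, hsinh_jk, hsinh_ik, hsinh_ij]
  field_simp
  rw [hcosh_ij]
  field_simp
  linear_combination -sin_add_mul_cos_add_sin_add_mul_cos_sub_sin_add_mul_cos p q r

/-- For a hyperbolic triangle with side lengths `djk, dik, dij` and opposite angles
`αi, αj, αk`, one has
`2·sin((αi+αj−αk)/2)·cosh(dij/2) = (sinh²(djk/2)+sinh²(dik/2)−sinh²(dij/2))/(sinh(djk/2)·sinh(dik/2))`. -/
theorem stmt2 (djk dik dij αi αj αk : ℝ)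
    (hdjk : 0 < djk) (hdik : 0 < dik) (hdij : 0 < dij)
    (htri1 : djk < dik + dij) (htri2 : dik < djk + dij) (htri3 : dij < djk + dik)
    (hαi : αi ∈ Set.Ioo 0 π) (hαj : αj ∈ Set.Ioo 0 π) (hαk : αk ∈ Set.Ioo 0 π)
    (hsum : αi + αj + αk < π)
    (hcosi : Real.cosh djk = (Real.cos αi + Real.cos αj * Real.cos αk) /
      (Real.sin αj * Real.sin αk))
    (hcosj : Real.cosh dik = (Real.cos αj + Real.cos αk * Real.cos αi) /
      (Real.sin αk * Real.sin αi))
    (hcosk : Real.cosh dij = (Real.cos αk + Real.cos αi * Real.cos αj) /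
      (Real.sin αi * Real.sin αj)) :
    2 * Real.sin ((αi + αj - αk) / 2) * Real.cosh (dij / 2) =
      (Real.sinh (djk / 2) ^ 2 + Real.sinh (dik / 2) ^ 2 - Real.sinh (dij / 2) ^ 2) /
        (Real.sinh (djk / 2) * Real.sinh (dik / 2)) :=
  stmt2_general djk dik dij αi αj αk hdjk hdik hαi hαj hαk hsum hcosi hcosj hcosk
end

section
/- Let a hyperbolic triangle have edge lengths l_rs (for {r,s}⊂{i,j,k}) given in terms of fixed background lengths d_rs and conformal factors u_i, u_j, u_k by sinh(l_rs/2) = sinh(d_rs/2)·e^{u_r+u_s}. Then the partial derivative of the angle α_i (opposite edge {jk}) with respect to u_j equals (1/cosh²(l_ij/2))·tan((α_i+α_j−α_k)/2). -/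
open Real

/-- Vertex-scaled edge length: `l` with `sinh(l/2) = sinh(d/2)·e^(ur+us)`. -/
noncomputable def vsLen (d ur us : ℝ) : ℝ :=
  2 * Real.arsinh (Real.sinh (d / 2) * Real.exp (ur + us))

/-- The triangle inequalities for the vertex-scaled lengths. -/
def vsAdm (dij dik djk ui uj uk : ℝ) : Prop :=
  vsLen djk uj uk < vsLen dik ui uk + vsLen dij ui uj ∧
  vsLen dik ui uk < vsLen djk uj uk + vsLen dij ui uj ∧
  vsLen dij ui uj < vsLen djk uj uk + vsLen dik ui uk

/-!
Near an admissible point, `αi` is `arccos` of the hyperbolic law of cosines, so its derivative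
follows from the chain rule, with `∂l/∂u = 2 sinh l / (1 + cosh l)` for each length depending on `uj`. All
three angles have sines `√G / (sinh · sinh)` for the same `G = (sinh lij sinh lik sin αi)²`, a
polynomial in the `cosh l`. Expanding `sin` and `1 + cos` of `αi + αj - αk` in these terms gives
`tan((αi + αj - αk)/2) = (cosh ljk + cosh lik - cosh lij - 1) / √G`, which is what the chain rule
produces after multiplying by `cosh² (lij/2) = (1 + cosh lij)/2`.
-/

lemma cosh_half_sq (x : ℝ) : cosh (x / 2) ^ 2 = (1 + cosh x) / 2 := by
  have h := cosh_two_mul (x / 2)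
  rw [mul_div_cancel₀ x two_ne_zero] at h
  linarith [cosh_sq (x / 2)]

lemma two_mul_sinh_div_one_add_cosh (x : ℝ) :
    2 * sinh x / (1 + cosh x) = 2 * (sinh (x / 2) / cosh (x / 2)) := by
  have hs := sinh_two_mul (x / 2)
  rw [mul_div_cancel₀ x two_ne_zero] at hs
  rw [hs, ← mul_div_cancel₀ (1 + cosh x) (two_ne_zero' ℝ), ← cosh_half_sq]
  have := (cosh_pos (x / 2)).ne'
  field_simp

lemma tan_half_eq_sin_div_one_add_cos {θ : ℝ} (h : 1 + cos θ ≠ 0) :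
    tan (θ / 2) = sin θ / (1 + cos θ) := by
  have hs := sin_two_mul (θ / 2)
  have hc := cos_sq (θ / 2)
  rw [mul_div_cancel₀ θ two_ne_zero] at hs hc
  have hc0 : cos (θ / 2) ≠ 0 := by
    intro h0; apply h; rw [h0] at hc; linarith
  rw [tan_eq_sin_div_cos, hs, show 1 + cos θ = 2 * cos (θ / 2) ^ 2 by linarith]
  field_simp

lemma vsLen_comm (d ur us : ℝ) : vsLen d ur us = vsLen d us ur := by
  rw [vsLen, vsLen, add_comm]

lemma hasDerivAt_vsLen (d x t : ℝ) :
    HasDerivAt (fun s => vsLen d x s) (2 * sinh (vsLen d x t) / (1 + cosh (vsLen d x t))) t := by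
  set y := sinh (d / 2) * exp (x + t)
  have hy : HasDerivAt (fun s => sinh (d / 2) * exp (x + s)) y t := by
    simpa using (((hasDerivAt_id t).const_add x).exp.const_mul (sinh (d / 2)))
  have hL : vsLen d x t / 2 = arsinh y := by rw [vsLen]; ring
  refine (((hasDerivAt_arsinh y).comp t hy).const_mul 2).congr_deriv ?_
  rw [two_mul_sinh_div_one_add_cosh, hL, sinh_arsinh, cosh_arsinh]
  ring

lemma hasDerivAt_vsLen_left (d y t : ℝ) :
    HasDerivAt (fun s => vsLen d s y) (2 * sinh (vsLen d t y) / (1 + cosh (vsLen d t y))) t := by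
  simpa only [vsLen_comm d _ y] using hasDerivAt_vsLen d y t

/-- `x`, `y`, `z` are the angles opposite the sides `a`, `b`, `c`. -/
def IsHypTriangle (a b c x y z : ℝ) : Prop :=
  x ∈ Set.Ioo 0 π ∧ y ∈ Set.Ioo 0 π ∧ z ∈ Set.Ioo 0 π ∧
  cos x = (cosh c * cosh b - cosh a) / (sinh c * sinh b) ∧
  cos y = (cosh c * cosh a - cosh b) / (sinh c * sinh a) ∧
  cos z = (cosh b * cosh a - cosh c) / (sinh b * sinh a)

/-- Minus the Gram determinant of the vertices in the hyperboloid model. -/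
noncomputable def hypGram (a b c : ℝ) : ℝ :=
  1 + 2 * cosh a * cosh b * cosh c - cosh a ^ 2 - cosh b ^ 2 - cosh c ^ 2

lemma sin_eq_sqrt_hypGram_div {θ a b c : ℝ} (hθ : θ ∈ Set.Ioo 0 π) (hb : 0 < b) (hc : 0 < c)
    (hcos : cos θ = (cosh c * cosh b - cosh a) / (sinh c * sinh b)) :
    sin θ = √(hypGram a b c) / (sinh c * sinh b) := by
  have hs : 0 < sinh c * sinh b := mul_pos (sinh_pos_iff.mpr hc) (sinh_pos_iff.mpr hb)
  have hG : 1 - ((cosh c * cosh b - cosh a) / (sinh c * sinh b)) ^ 2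
      = hypGram a b c / (sinh c * sinh b) ^ 2 := by
    rw [hypGram]
    field_simp
    linear_combination (-(sinh b ^ 2)) * cosh_sq c - (cosh c ^ 2 - 1) * cosh_sq b
  rw [sin_eq_sqrt_one_sub_cos_sq hθ.1.le hθ.2.le, hcos, hG, sqrt_div' _ (sq_nonneg _),
    sqrt_sq hs.le]

section IsHypTriangle

variable {a b c x y z : ℝ}

lemma IsHypTriangle.sin_eq (h : IsHypTriangle a b c x y z) (ha : 0 < a) (hb : 0 < b)
    (hc : 0 < c) :
    sin x = √(hypGram a b c) / (sinh c * sinh b) ∧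
      sin y = √(hypGram a b c) / (sinh c * sinh a) ∧
      sin z = √(hypGram a b c) / (sinh b * sinh a) := by
  obtain ⟨hx, hy, hz, hcx, hcy, hcz⟩ := h
  have hGba : hypGram b a c = hypGram a b c := by unfold hypGram; ring
  have hGca : hypGram c a b = hypGram a b c := by unfold hypGram; ring
  exact ⟨sin_eq_sqrt_hypGram_div hx hb hc hcx, hGba ▸ sin_eq_sqrt_hypGram_div hy ha hc hcy,
    hGca ▸ sin_eq_sqrt_hypGram_div hz ha hb hcz⟩

lemma IsHypTriangle.sqrt_hypGram_pos (h : IsHypTriangle a b c x y z) (ha : 0 < a) (hb : 0 < b)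
    (hc : 0 < c) : 0 < √(hypGram a b c) := by
  have hsin := sin_pos_of_pos_of_lt_pi h.1.1 h.1.2
  rw [(h.sin_eq ha hb hc).1] at hsin
  exact (div_pos_iff_of_pos_right (mul_pos (sinh_pos_iff.mpr hc) (sinh_pos_iff.mpr hb))).mp hsin

lemma IsHypTriangle.tan_half_add_sub (h : IsHypTriangle a b c x y z) (ha : 0 < a) (hb : 0 < b)
    (hc : 0 < c) :
    tan ((x + y - z) / 2) = (cosh a + cosh b - cosh c - 1) / √(hypGram a b c) := by
  obtain ⟨hsx, hsy, hsz⟩ := h.sin_eq ha hb hc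
  have hD := h.sqrt_hypGram_pos ha hb hc
  obtain ⟨-, -, -, hcx, hcy, hcz⟩ := h
  have hG := sq_sqrt (le_of_lt (sqrt_pos.mp hD))
  set D := √(hypGram a b c)
  have hsa := (sinh_pos_iff.mpr ha).ne'
  have hsb := (sinh_pos_iff.mpr hb).ne'
  have hsc := (sinh_pos_iff.mpr hc).ne'
  have hA : cosh a - 1 ≠ 0 := sub_ne_zero.mpr (one_lt_cosh.mpr ha.ne').ne'
  have hB : cosh b - 1 ≠ 0 := sub_ne_zero.mpr (one_lt_cosh.mpr hb.ne').ne'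
  have hC : cosh c + 1 ≠ 0 := (add_pos (cosh_pos c) one_pos).ne'
  have hsin : sin (x + y - z) =
      D * (cosh a + cosh b - cosh c - 1) / ((cosh a - 1) * (cosh b - 1) * (cosh c + 1)) := by
    rw [sin_sub, sin_add, cos_add, hcx, hcy, hcz, hsx, hsy, hsz]
    field_simp
    -- only `D ^ 2` and `sinh _ ^ 2` survive, so everything becomes a polynomial in the `cosh`
    ring_nf
    rw [hG, sinh_sq, sinh_sq, sinh_sq, hypGram]
    ring
  have hcos : 1 + cos (x + y - z) = D ^ 2 / ((cosh a - 1) * (cosh b - 1) * (cosh c + 1)) := by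
    rw [cos_sub, cos_add, sin_add, hcx, hcy, hcz, hsx, hsy, hsz]
    field_simp
    ring_nf
    rw [hG, sinh_sq, sinh_sq, sinh_sq, hypGram]
    ring
  rw [tan_half_eq_sin_div_one_add_cos (by rw [hcos]; positivity), hsin, hcos]
  field_simp

end IsHypTriangle

lemma hasDerivAt_arccos_lawOfCosines {a c : ℝ → ℝ} {a' c' t b θ : ℝ} (ha : HasDerivAt a a' t)
    (hc : HasDerivAt c c' t) (hb : sinh b ≠ 0) (hct : sinh (c t) ≠ 0) (hθ : θ ∈ Set.Ioo 0 π)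
    (hcos : cos θ = (cosh (c t) * cosh b - cosh (a t)) / (sinh (c t) * sinh b)) :
    HasDerivAt (fun s => arccos ((cosh (c s) * cosh b - cosh (a s)) / (sinh (c s) * sinh b)))
      ((sinh (a t) * a' - (cosh (a t) * cosh (c t) - cosh b) / sinh (c t) * c') /
        (sin θ * sinh (c t) * sinh b)) t := by
  have hsin : 0 < sin θ := sin_pos_of_pos_of_lt_pi hθ.1 hθ.2
  have hsqrt : √(1 - cos θ ^ 2) = sin θ := (sin_eq_sqrt_one_sub_cos_sq hθ.1.le hθ.2.le).symm
  have hne : cos θ ≠ -1 ∧ cos θ ≠ 1 := by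
    constructor <;> intro h <;> rw [h] at hsqrt <;> norm_num at hsqrt <;> linarith
  have hf : HasDerivAt (fun s => (cosh (c s) * cosh b - cosh (a s)) / (sinh (c s) * sinh b)) _ t :=
    ((hc.cosh.mul_const (cosh b)).sub ha.cosh).div (hc.sinh.mul_const (sinh b))
      (mul_ne_zero hct hb)
  rw [hcos] at hne
  refine ((hasDerivAt_arccos hne.1 hne.2).comp t hf).congr_deriv ?_
  rw [← hcos, hsqrt, Pi.sub_apply]
  field_simp
  linear_combination c' * cosh b * cosh_sq (c t)

namespace vsAdm

variable {dij dik djk ui uj uk : ℝ}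

lemma vsLen_pos (h : vsAdm dij dik djk ui uj uk) :
    0 < vsLen djk uj uk ∧ 0 < vsLen dik ui uk ∧ 0 < vsLen dij ui uj := by
  obtain ⟨h₁, h₂, h₃⟩ := h
  exact ⟨by linarith, by linarith, by linarith⟩

lemma eventually_nhds (h : vsAdm dij dik djk ui uj uk) :
    ∀ᶠ t in nhds uj, vsAdm dij dik djk ui t uk := by
  have hij := (hasDerivAt_vsLen dij ui uj).continuousAt
  have hjk := (hasDerivAt_vsLen_left djk uk uj).continuousAt
  filter_upwards [hjk.eventually_lt (continuousAt_const.add hij) h.1,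
    continuousAt_const.eventually_lt (hjk.add hij) h.2.1,
    hij.eventually_lt (hjk.add continuousAt_const) h.2.2] with t h₁ h₂ h₃
  exact ⟨h₁, h₂, h₃⟩

end vsAdm

theorem stmt3_general (dij dik djk : ℝ)
    (αi αj αk : ℝ → ℝ → ℝ → ℝ)
    (hang : ∀ ui uj uk, vsAdm dij dik djk ui uj uk →
      αi ui uj uk ∈ Set.Ioo 0 π ∧ αj ui uj uk ∈ Set.Ioo 0 π ∧ αk ui uj uk ∈ Set.Ioo 0 π ∧
      Real.cos (αi ui uj uk) =
        (Real.cosh (vsLen dij ui uj) * Real.cosh (vsLen dik ui uk)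
            - Real.cosh (vsLen djk uj uk)) /
          (Real.sinh (vsLen dij ui uj) * Real.sinh (vsLen dik ui uk)) ∧
      Real.cos (αj ui uj uk) =
        (Real.cosh (vsLen dij ui uj) * Real.cosh (vsLen djk uj uk)
            - Real.cosh (vsLen dik ui uk)) /
          (Real.sinh (vsLen dij ui uj) * Real.sinh (vsLen djk uj uk)) ∧
      Real.cos (αk ui uj uk) =
        (Real.cosh (vsLen dik ui uk) * Real.cosh (vsLen djk uj uk)
            - Real.cosh (vsLen dij ui uj)) /
          (Real.sinh (vsLen dik ui uk) * Real.sinh (vsLen djk uj uk)))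
    (ui uj uk : ℝ) (hadm : vsAdm dij dik djk ui uj uk) :
    deriv (fun t => αi ui t uk) uj =
      (1 / Real.cosh (vsLen dij ui uj / 2) ^ 2) *
        Real.tan ((αi ui uj uk + αj ui uj uk - αk ui uj uk) / 2) := by
  obtain ⟨ha, hb, hc⟩ := hadm.vsLen_pos
  have htri : IsHypTriangle (vsLen djk uj uk) (vsLen dik ui uk) (vsLen dij ui uj)
      (αi ui uj uk) (αj ui uj uk) (αk ui uj uk) := hang ui uj uk hadm
  have hloc : (fun t => αi ui t uk) =ᶠ[nhds uj] fun t => arccos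
      ((cosh (vsLen dij ui t) * cosh (vsLen dik ui uk) - cosh (vsLen djk t uk)) /
        (sinh (vsLen dij ui t) * sinh (vsLen dik ui uk))) := by
    filter_upwards [hadm.eventually_nhds] with t ht
    obtain ⟨hα, -, -, hcos, -⟩ := hang ui t uk ht
    rw [← hcos, arccos_cos hα.1.le hα.2.le]
  have hderiv := hasDerivAt_arccos_lawOfCosines (hasDerivAt_vsLen_left djk uk uj)
    (hasDerivAt_vsLen dij ui uj) (sinh_pos_iff.mpr hb).ne' (sinh_pos_iff.mpr hc).ne' htri.1
    htri.2.2.2.1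
  rw [hloc.deriv_eq, hderiv.deriv, (htri.sin_eq ha hb hc).1, htri.tan_half_add_sub ha hb hc,
    cosh_half_sq]
  have hD := (htri.sqrt_hypGram_pos ha hb hc).ne'
  have hsb := (sinh_pos_iff.mpr hb).ne'
  have hsc := (sinh_pos_iff.mpr hc).ne'
  have hA : 1 + cosh (vsLen djk uj uk) ≠ 0 := by positivity
  have hC : 1 + cosh (vsLen dij ui uj) ≠ 0 := by positivity
  field_simp
  linear_combination -(1 + cosh (vsLen dij ui uj)) * cosh_sq (vsLen djk uj uk)

/-- In the vertex-scaling setup, the partial derivative of the angle `αi`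
(opposite the edge `{jk}`) with respect to `uj` equals
`(1/cosh²(lij/2))·tan((αi+αj−αk)/2)`. -/
theorem stmt3 (dij dik djk : ℝ) (hdij : 0 < dij) (hdik : 0 < dik) (hdjk : 0 < djk)
    (αi αj αk : ℝ → ℝ → ℝ → ℝ)
    (hang : ∀ ui uj uk, vsAdm dij dik djk ui uj uk →
      αi ui uj uk ∈ Set.Ioo 0 π ∧ αj ui uj uk ∈ Set.Ioo 0 π ∧ αk ui uj uk ∈ Set.Ioo 0 π ∧
      Real.cos (αi ui uj uk) =
        (Real.cosh (vsLen dij ui uj) * Real.cosh (vsLen dik ui uk)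
            - Real.cosh (vsLen djk uj uk)) /
          (Real.sinh (vsLen dij ui uj) * Real.sinh (vsLen dik ui uk)) ∧
      Real.cos (αj ui uj uk) =
        (Real.cosh (vsLen dij ui uj) * Real.cosh (vsLen djk uj uk)
            - Real.cosh (vsLen dik ui uk)) /
          (Real.sinh (vsLen dij ui uj) * Real.sinh (vsLen djk uj uk)) ∧
      Real.cos (αk ui uj uk) =
        (Real.cosh (vsLen dik ui uk) * Real.cosh (vsLen djk uj uk)
            - Real.cosh (vsLen dij ui uj)) /
          (Real.sinh (vsLen dik ui uk) * Real.sinh (vsLen djk uj uk)))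
    (ui uj uk : ℝ) (hadm : vsAdm dij dik djk ui uj uk) :
    deriv (fun t => αi ui t uk) uj =
      (1 / Real.cosh (vsLen dij ui uj / 2) ^ 2) *
        Real.tan ((αi ui uj uk + αj ui uj uk - αk ui uj uk) / 2) :=
  stmt3_general dij dik djk αi αj αk hang ui uj uk hadm
end

section
/- With the same vertex-scaling setup, for the angle α_i opposite edge {jk} one has ∂α_i/∂u_j = 2(cosh l_jk + cosh l_ik − cosh l_ij − 1)/(A(cosh l_ij + 1)), where A = sinh l_ik · sinh l_ij · sin α_i. -/
open Real

/-! Vertex scaling gives `cosh l_rs = 1 + 2 sinh²(d_rs/2) e^(2(u_r+u_s))`, hence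
`∂(cosh l_rs)/∂u_r = 2 (cosh l_rs - 1)`. In the cosh values `x = cosh l_ij`, `y = cosh l_ik`,
`z = cosh l_jk` the cosine law reads `cos α_i = (x y - z) / (√(x² - 1) √(y² - 1))`, whose
`u_j`-derivative factors as `-2 (y + z - x - 1) / ((x + 1) √(x² - 1) √(y² - 1))`. Since the triangle
inequalities are an open condition, `α_i = arccos (cos α_i)` near the given point, and the chain
rule divides this derivative by `-sin α_i`. -/

theorem sinh_eq_sqrt_cosh_sq_sub_one {x : ℝ} (hx : 0 ≤ x) : sinh x = √(cosh x ^ 2 - 1) := by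
  rw [cosh_sq, add_sub_cancel_right, sqrt_sq (sinh_nonneg_iff.2 hx)]

theorem vsLen_comm_s4 (d a b : ℝ) : vsLen d a b = vsLen d b a := by
  rw [vsLen, vsLen, add_comm]

theorem vsLen_nonneg {d : ℝ} (hd : 0 ≤ d) (a b : ℝ) : 0 ≤ vsLen d a b := by
  have hs : 0 ≤ sinh (d / 2) := sinh_nonneg_iff.2 (by linarith)
  exact mul_nonneg zero_le_two (arsinh_nonneg_iff.2 (mul_nonneg hs (exp_pos (a + b)).le))

theorem continuous_vsLen (d : ℝ) : Continuous fun p : ℝ × ℝ => vsLen d p.1 p.2 := by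
  unfold vsLen
  exact continuous_const.mul (continuous_arsinh.comp (continuous_const.mul
    (continuous_exp.comp (continuous_fst.add continuous_snd))))

theorem vsAdm.eventually_nhds_snd {dij dik djk ui uj uk : ℝ} (h : vsAdm dij dik djk ui uj uk) :
    ∀ᶠ t in nhds uj, vsAdm dij dik djk ui t uk := by
  have hc : ∀ d (f g : ℝ → ℝ), Continuous f → Continuous g →
      ContinuousAt (fun t => vsLen d (f t) (g t)) uj := fun d f g hf hg =>
    ((continuous_vsLen d).comp (hf.prodMk hg)).continuousAt
  have hij := hc dij (fun _ => ui) id continuous_const continuous_id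
  have hik := hc dik (fun _ => ui) (fun _ => uk) continuous_const continuous_const
  have hjk := hc djk id (fun _ => uk) continuous_id continuous_const
  obtain ⟨h1, h2, h3⟩ := h
  filter_upwards [hjk.eventually_lt (hik.add hij) h1, hik.eventually_lt (hjk.add hij) h2,
    hij.eventually_lt (hjk.add hik) h3] with t h1 h2 h3
  exact ⟨h1, h2, h3⟩

theorem cosh_vsLen (d a b : ℝ) :
    cosh (vsLen d a b) = 1 + 2 * sinh (d / 2) ^ 2 * exp (2 * (a + b)) := by
  rw [vsLen, cosh_two_mul, cosh_arsinh, sinh_arsinh, sq_sqrt (by positivity), mul_pow,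
    ← exp_nat_mul]
  push_cast; ring

theorem one_lt_cosh_vsLen {d : ℝ} (hd : 0 < d) (a b : ℝ) : 1 < cosh (vsLen d a b) := by
  have hs : 0 < sinh (d / 2) := sinh_pos_iff.2 (by linarith)
  rw [cosh_vsLen]
  exact lt_add_of_pos_right 1 (mul_pos (mul_pos two_pos (pow_pos hs 2)) (exp_pos _))

theorem hasDerivAt_cosh_vsLen_right (d a t : ℝ) :
    HasDerivAt (fun s => cosh (vsLen d a s)) (2 * (cosh (vsLen d a t) - 1)) t := by
  simp only [cosh_vsLen]
  have := (((hasDerivAt_id' t).const_add a).const_mul 2).exp.const_mul (2 * sinh (d / 2) ^ 2)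
    |>.const_add 1
  exact this.congr_deriv (by ring)

theorem hasDerivAt_cosh_vsLen_left (d b t : ℝ) :
    HasDerivAt (fun s => cosh (vsLen d s b)) (2 * (cosh (vsLen d t b) - 1)) t := by
  simp only [vsLen_comm_s4 d _ b]
  exact hasDerivAt_cosh_vsLen_right d b t

theorem hasDerivAt_cosine_law {x z : ℝ → ℝ} {y t : ℝ} (hx : HasDerivAt x (2 * (x t - 1)) t)
    (hz : HasDerivAt z (2 * (z t - 1)) t) (hx1 : 1 < x t) (hy1 : 1 < y) :
    HasDerivAt (fun s => (x s * y - z s) / (√(x s ^ 2 - 1) * √(y ^ 2 - 1)))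
      (-(2 * (z t + y - x t - 1)) / (√(y ^ 2 - 1) * √(x t ^ 2 - 1) * (x t + 1))) t := by
  have hX : 0 < x t ^ 2 - 1 := by nlinarith
  have hY : 0 < y ^ 2 - 1 := by nlinarith
  have hsx := ((hx.fun_pow 2).sub_const 1).sqrt hX.ne'
  have := ((hx.mul_const y).fun_sub hz).fun_div (hsx.mul_const (√(y ^ 2 - 1)))
    (by positivity)
  refine this.congr_deriv ?_
  have hsqX := sq_sqrt hX.le
  have hposX := sqrt_pos.2 hX
  have hposY := sqrt_pos.2 hY
  field_simp
  rw [hsqX]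
  norm_num
  ring

theorem hasDerivAt_of_cos_eq {f g : ℝ → ℝ} {g' t : ℝ}
    (hfg : ∀ᶠ s in nhds t, f s ∈ Set.Icc 0 π ∧ cos (f s) = g s) (ht : f t ∈ Set.Ioo 0 π)
    (hg : HasDerivAt g g' t) : HasDerivAt f (-g' / sin (f t)) t := by
  have hf : f =ᶠ[nhds t] fun s => arccos (g s) :=
    hfg.mono fun _ hs => (arccos_cos hs.1.1 hs.1.2).symm.trans (congrArg arccos hs.2)
  have hgt : g t = cos (f t) := hfg.self_of_nhds.2.symm
  have hsin : 0 < sin (f t) := sin_pos_of_pos_of_lt_pi ht.1 ht.2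
  have hsq := sin_sq_add_cos_sq (f t)
  have hne1 : g t ≠ -1 := fun h => by nlinarith
  have hne2 : g t ≠ 1 := fun h => by nlinarith
  refine (((hasDerivAt_arccos hne1 hne2).comp t hg).congr_of_eventuallyEq hf).congr_deriv ?_
  rw [hgt, ← sin_eq_sqrt_one_sub_cos_sq ht.1.le ht.2.le]
  ring

theorem stmt4_general (dij dik djk : ℝ) (hdij : 0 < dij) (hdik : 0 < dik)
    (αi αj αk : ℝ → ℝ → ℝ → ℝ)
    (hang : ∀ ui uj uk, vsAdm dij dik djk ui uj uk →
      αi ui uj uk ∈ Set.Ioo 0 π ∧ αj ui uj uk ∈ Set.Ioo 0 π ∧ αk ui uj uk ∈ Set.Ioo 0 π ∧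
      Real.cos (αi ui uj uk) =
        (Real.cosh (vsLen dij ui uj) * Real.cosh (vsLen dik ui uk)
            - Real.cosh (vsLen djk uj uk)) /
          (Real.sinh (vsLen dij ui uj) * Real.sinh (vsLen dik ui uk)) ∧
      Real.cos (αj ui uj uk) =
        (Real.cosh (vsLen dij ui uj) * Real.cosh (vsLen djk uj uk)
            - Real.cosh (vsLen dik ui uk)) /
          (Real.sinh (vsLen dij ui uj) * Real.sinh (vsLen djk uj uk)) ∧
      Real.cos (αk ui uj uk) =
        (Real.cosh (vsLen dik ui uk) * Real.cosh (vsLen djk uj uk)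
            - Real.cosh (vsLen dij ui uj)) /
          (Real.sinh (vsLen dik ui uk) * Real.sinh (vsLen djk uj uk)))
    (ui uj uk : ℝ) (hadm : vsAdm dij dik djk ui uj uk) :
    deriv (fun t => αi ui t uk) uj =
      2 * (Real.cosh (vsLen djk uj uk) + Real.cosh (vsLen dik ui uk)
            - Real.cosh (vsLen dij ui uj) - 1) /
        ((Real.sinh (vsLen dik ui uk) * Real.sinh (vsLen dij ui uj) * Real.sin (αi ui uj uk)) *
          (Real.cosh (vsLen dij ui uj) + 1)) := by
  have hsinh : ∀ {d : ℝ}, 0 < d → ∀ a b,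
      sinh (vsLen d a b) = √(cosh (vsLen d a b) ^ 2 - 1) := fun hd a b =>
    sinh_eq_sqrt_cosh_sq_sub_one (vsLen_nonneg hd.le a b)
  have hcos : ∀ᶠ t in nhds uj, αi ui t uk ∈ Set.Icc 0 π ∧
      cos (αi ui t uk) = (cosh (vsLen dij ui t) * cosh (vsLen dik ui uk) - cosh (vsLen djk t uk)) /
        (√(cosh (vsLen dij ui t) ^ 2 - 1) * √(cosh (vsLen dik ui uk) ^ 2 - 1)) := by
    filter_upwards [hadm.eventually_nhds_snd] with t ht
    obtain ⟨hα, -, -, hcos, -⟩ := hang ui t uk ht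
    exact ⟨Set.Ioo_subset_Icc_self hα, by rw [hcos, hsinh hdij, hsinh hdik]⟩
  have hlaw := hasDerivAt_cosine_law (hasDerivAt_cosh_vsLen_right dij ui uj)
    (hasDerivAt_cosh_vsLen_left djk uk uj) (one_lt_cosh_vsLen hdij ui uj)
    (one_lt_cosh_vsLen hdik ui uk)
  rw [(hasDerivAt_of_cos_eq hcos (hang ui uj uk hadm).1 hlaw).deriv, hsinh hdij, hsinh hdik,
    neg_div, neg_div, neg_div, neg_neg, div_div, mul_right_comm]

/-- In the vertex-scaling setup, the partial derivative of the angle `αi`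
(opposite the edge `{jk}`) with respect to `uj` equals
`(1/cosh²(lij/2))·tan((αi+αj−αk)/2)`. -/
theorem stmt4 (dij dik djk : ℝ) (hdij : 0 < dij) (hdik : 0 < dik) (hdjk : 0 < djk)
    (αi αj αk : ℝ → ℝ → ℝ → ℝ)
    (hang : ∀ ui uj uk, vsAdm dij dik djk ui uj uk →
      αi ui uj uk ∈ Set.Ioo 0 π ∧ αj ui uj uk ∈ Set.Ioo 0 π ∧ αk ui uj uk ∈ Set.Ioo 0 π ∧
      Real.cos (αi ui uj uk) =
        (Real.cosh (vsLen dij ui uj) * Real.cosh (vsLen dik ui uk)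
            - Real.cosh (vsLen djk uj uk)) /
          (Real.sinh (vsLen dij ui uj) * Real.sinh (vsLen dik ui uk)) ∧
      Real.cos (αj ui uj uk) =
        (Real.cosh (vsLen dij ui uj) * Real.cosh (vsLen djk uj uk)
            - Real.cosh (vsLen dik ui uk)) /
          (Real.sinh (vsLen dij ui uj) * Real.sinh (vsLen djk uj uk)) ∧
      Real.cos (αk ui uj uk) =
        (Real.cosh (vsLen dik ui uk) * Real.cosh (vsLen djk uj uk)
            - Real.cosh (vsLen dij ui uj)) /
          (Real.sinh (vsLen dik ui uk) * Real.sinh (vsLen djk uj uk)))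
    (ui uj uk : ℝ) (hadm : vsAdm dij dik djk ui uj uk) :
    deriv (fun t => αi ui t uk) uj =
      2 * (Real.cosh (vsLen djk uj uk) + Real.cosh (vsLen dik ui uk)
            - Real.cosh (vsLen dij ui uj) - 1) /
        ((Real.sinh (vsLen dik ui uk) * Real.sinh (vsLen dij ui uj) * Real.sin (αi ui uj uk)) *
          (Real.cosh (vsLen dij ui uj) + 1)) :=
  stmt4_general dij dik djk hdij hdik αi αj αk hang ui uj uk hadm
end

section
/- For a hyperbolic triangle with side lengths d_jk, d_ik, d_ij and angles α_i, α_j, α_k, the quantity sinh² d_ik · sinh² d_ij · sin² α_i equals 1 + 2 cosh d_jk cosh d_ik cosh d_ij − cosh² d_jk − cosh² d_ik − cosh² d_ij, and this quantity is strictly positive. -/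
open Real

/-- For a hyperbolic triangle with side lengths `djk, dik, dij` and angle `αi` opposite
`djk`, the quantity `sinh² dik · sinh² dij · sin² αi` equals
`1 + 2 cosh djk cosh dik cosh dij − cosh² djk − cosh² dik − cosh² dij`, and this
quantity is strictly positive. -/
theorem stmt6 (djk dik dij αi : ℝ)
    (hdjk : 0 < djk) (hdik : 0 < dik) (hdij : 0 < dij)
    (htri1 : djk < dik + dij) (htri2 : dik < djk + dij) (htri3 : dij < djk + dik)
    (hαi : αi ∈ Set.Ioo 0 π)
    (hcos : Real.cos αi =
      (Real.cosh dik * Real.cosh dij - Real.cosh djk) / (Real.sinh dik * Real.sinh dij)) :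
    Real.sinh dik ^ 2 * Real.sinh dij ^ 2 * Real.sin αi ^ 2 =
      1 + 2 * Real.cosh djk * Real.cosh dik * Real.cosh dij
        - Real.cosh djk ^ 2 - Real.cosh dik ^ 2 - Real.cosh dij ^ 2 ∧
    0 < 1 + 2 * Real.cosh djk * Real.cosh dik * Real.cosh dij
        - Real.cosh djk ^ 2 - Real.cosh dik ^ 2 - Real.cosh dij ^ 2 := by
  have h1 : 0 < Real.sinh dik := Real.sinh_pos_iff.2 hdik
  have h2 : 0 < Real.sinh dij := Real.sinh_pos_iff.2 hdij
  have hs : (0:ℝ) < Real.sinh dik * Real.sinh dij := mul_pos h1 h2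
  rw [eq_div_iff hs.ne'] at hcos
  have e1 : Real.sinh dik ^ 2 = Real.cosh dik ^ 2 - 1 := by
    have := Real.cosh_sq_sub_sinh_sq dik; nlinarith
  have e2 : Real.sinh dij ^ 2 = Real.cosh dij ^ 2 - 1 := by
    have := Real.cosh_sq_sub_sinh_sq dij; nlinarith
  have hsin2 : Real.sin αi ^ 2 = 1 - Real.cos αi ^ 2 := by
    have := Real.sin_sq_add_cos_sq αi; linarith
  have heq : Real.sinh dik ^ 2 * Real.sinh dij ^ 2 * Real.sin αi ^ 2 =
      1 + 2 * Real.cosh djk * Real.cosh dik * Real.cosh dij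
        - Real.cosh djk ^ 2 - Real.cosh dik ^ 2 - Real.cosh dij ^ 2 := by
    calc Real.sinh dik ^ 2 * Real.sinh dij ^ 2 * Real.sin αi ^ 2
        = Real.sinh dik ^ 2 * Real.sinh dij ^ 2
          - (Real.cos αi * (Real.sinh dik * Real.sinh dij)) ^ 2 := by rw [hsin2]; ring
      _ = (Real.cosh dik ^ 2 - 1) * (Real.cosh dij ^ 2 - 1)
          - (Real.cosh dik * Real.cosh dij - Real.cosh djk) ^ 2 := by rw [hcos, e1, e2]
      _ = 1 + 2 * Real.cosh djk * Real.cosh dik * Real.cosh dij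
          - Real.cosh djk ^ 2 - Real.cosh dik ^ 2 - Real.cosh dij ^ 2 := by ring
  refine ⟨heq, ?_⟩
  rw [← heq]
  have hsinpos : 0 < Real.sin αi := Real.sin_pos_of_pos_of_lt_pi hαi.1 hαi.2
  positivity
end

section
/- For two hyperbolic triangles △v_iv_jv_k and △v_iv_jv_l sharing edge {v_iv_j} of length d_ij, the weight B_{ij} = (1/cosh²(d_ij/2))·(tan((α_i^{jk}+α_j^{ik}−α_k^{ij})/2) + tan((α_i^{jl}+α_j^{il}−α_l^{ij})/2)) can be rewritten as (1/cosh²(d_ij/2))·sin((α_i^{jk}+α_j^{ik}−α_k^{ij}+α_i^{jl}+α_j^{il}−α_l^{ij})/2)/(sin((π−α_i^{jk}−α_j^{ik}+α_k^{ij})/2)·sin((π−α_i^{jl}−α_j^{il}+α_l^{ij})/2)), and consequently B_{ij} ≥ 0 if and only if the Delaunay condition α_l^{ij}+α_k^{ij} ≤ α_i^{jk}+α_j^{ik}+α_i^{jl}+α_j^{il} holds. -/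
open Real

theorem tan_add_tan_aux (x y : ℝ) (hx : Real.cos x ≠ 0) (hy : Real.cos y ≠ 0) :
    Real.tan x + Real.tan y = Real.sin (x + y) / (Real.cos x * Real.cos y) := by
  rw [Real.tan_eq_sin_div_cos, Real.tan_eq_sin_div_cos, Real.sin_add]
  field_simp

/-- For two hyperbolic triangles `△v_iv_jv_k`, `△v_iv_jv_l` sharing the edge `{v_iv_j}`
of length `dij`, the weight `B_ij` (defined via tangents) can be rewritten as a quotient
of sines, and `B_ij ≥ 0` iff the Delaunay condition holds. -/
theorem stmt8 (dij : ℝ) (hdij : 0 < dij)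
    (aijk ajik akij ajli ailj alij : ℝ)
    -- angles of triangle (i,j,k): aijk at v_i, ajik at v_j, akij at v_k
    (h1 : aijk ∈ Set.Ioo 0 π) (h2 : ajik ∈ Set.Ioo 0 π) (h3 : akij ∈ Set.Ioo 0 π)
    (hsum1 : aijk + ajik + akij < π)
    -- angles of triangle (i,j,l): ajli at v_i, ailj at v_j, alij at v_l
    (h4 : ajli ∈ Set.Ioo 0 π) (h5 : ailj ∈ Set.Ioo 0 π) (h6 : alij ∈ Set.Ioo 0 π)
    (hsum2 : ajli + ailj + alij < π)
    (B : ℝ)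
    (hB : B = (1 / Real.cosh (dij / 2) ^ 2) *
      (Real.tan ((aijk + ajik - akij) / 2) + Real.tan ((ajli + ailj - alij) / 2))) :
    B = (1 / Real.cosh (dij / 2) ^ 2) *
        (Real.sin ((aijk + ajik - akij + ajli + ailj - alij) / 2) /
          (Real.sin ((π - aijk - ajik + akij) / 2) * Real.sin ((π - ajli - ailj + alij) / 2))) ∧
      (0 ≤ B ↔ alij + akij ≤ aijk + ajik + ajli + ailj) := by
  obtain ⟨h1a, h1b⟩ := h1
  obtain ⟨h2a, h2b⟩ := h2
  obtain ⟨h3a, h3b⟩ := h3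
  obtain ⟨h4a, h4b⟩ := h4
  obtain ⟨h5a, h5b⟩ := h5
  obtain ⟨h6a, h6b⟩ := h6
  set A := (aijk + ajik - akij) / 2 with hA
  set C := (ajli + ailj - alij) / 2 with hC
  have hApi : A < π / 2 := by rw [hA]; linarith
  have hAneg : -(π / 2) < A := by rw [hA]; linarith
  have hCpi : C < π / 2 := by rw [hC]; linarith
  have hCneg : -(π / 2) < C := by rw [hC]; linarith
  have hcosA : 0 < Real.cos A := Real.cos_pos_of_mem_Ioo ⟨hAneg, hApi⟩
  have hcosC : 0 < Real.cos C := Real.cos_pos_of_mem_Ioo ⟨hCneg, hCpi⟩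
  have hs1 : Real.sin ((π - aijk - ajik + akij) / 2) = Real.cos A := by
    have : (π - aijk - ajik + akij) / 2 = π / 2 - A := by rw [hA]; ring
    rw [this, Real.sin_pi_div_two_sub]
  have hs2 : Real.sin ((π - ajli - ailj + alij) / 2) = Real.cos C := by
    have : (π - ajli - ailj + alij) / 2 = π / 2 - C := by rw [hC]; ring
    rw [this, Real.sin_pi_div_two_sub]
  have hAC : (aijk + ajik - akij + ajli + ailj - alij) / 2 = A + C := by
    rw [hA, hC]; ring
  have hBeq : B = (1 / Real.cosh (dij / 2) ^ 2) *
      (Real.sin (A + C) / (Real.cos A * Real.cos C)) := by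
    rw [hB, tan_add_tan_aux A C hcosA.ne' hcosC.ne']
  constructor
  · rw [hBeq, hs1, hs2, hAC]
  · rw [hBeq]
    have hcosh : 0 < 1 / Real.cosh (dij / 2) ^ 2 := by positivity
    have hden : 0 < Real.cos A * Real.cos C := mul_pos hcosA hcosC
    rw [mul_nonneg_iff_of_pos_left hcosh, div_nonneg_iff]
    have hsin : 0 ≤ Real.sin (A + C) ↔ 0 ≤ A + C := by
      constructor
      · intro h
        by_contra hneg
        push_neg at hneg
        have := Real.sin_neg_of_neg_of_neg_pi_lt hneg (by linarith)
        linarith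
      · intro h
        exact Real.sin_nonneg_of_nonneg_of_le_pi h (by linarith)
    constructor
    · rintro (⟨h, _⟩ | ⟨_, h⟩)
      · have := hsin.mp h
        rw [hA, hC] at this; linarith
      · linarith
    · intro h
      left
      refine ⟨hsin.mpr ?_, hden.le⟩
      rw [hA, hC]; linarith
end

section
/- Consider a vertex-scaled hyperbolic triangle with edge lengths l_rs given by sinh(l_rs/2) = sinh(d_rs/2)e^{u_r+u_s} and inner angles α_i, α_j, α_k. Suppose u_j, u_k ≥ C for some constant C. Then as u_i → +∞ the angle α_i at vertex v_i tends to 0, uniformly: for every ε > 0 there exists C̃ depending only on d_ij, d_jk, d_ki and C such that u_i > C̃ implies α_i < ε. -/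
open Real

lemma vsLen_eq (d ur us : ℝ) : vsLen d ur us =
    2 * (vsLen d ur us / 2) := by ring

lemma sinh_vsLen_half (d ur us : ℝ) :
    Real.sinh (vsLen d ur us / 2) = Real.sinh (d / 2) * Real.exp (ur + us) := by
  unfold vsLen
  rw [mul_div_cancel_left₀ _ (two_ne_zero), Real.sinh_arsinh]

lemma cosh_vsLen_s10 (d ur us : ℝ) :
    Real.cosh (vsLen d ur us) = 2 * (Real.sinh (d / 2) * Real.exp (ur + us)) ^ 2 + 1 := by
  rw [vsLen_eq d ur us, Real.cosh_two_mul, Real.cosh_sq, sinh_vsLen_half]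
  ring

lemma sinh_vsLen_ge (d ur us : ℝ) (hd : 0 < d) :
    2 * (Real.sinh (d / 2) * Real.exp (ur + us)) ^ 2 ≤ Real.sinh (vsLen d ur us) := by
  have hs : 0 < Real.sinh (d / 2) * Real.exp (ur + us) :=
    mul_pos (Real.sinh_pos_iff.mpr (by linarith)) (Real.exp_pos _)
  rw [vsLen_eq d ur us, Real.sinh_two_mul, sinh_vsLen_half]
  have hc : Real.sinh (vsLen d ur us / 2) ≤ Real.cosh (vsLen d ur us / 2) := by
    nlinarith [Real.cosh_sub_sinh (vsLen d ur us / 2), Real.exp_pos (-(vsLen d ur us / 2))]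
  rw [sinh_vsLen_half] at hc
  calc 2 * (Real.sinh (d / 2) * Real.exp (ur + us)) ^ 2
      = 2 * (Real.sinh (d / 2) * Real.exp (ur + us)) *
        (Real.sinh (d / 2) * Real.exp (ur + us)) := by ring
    _ ≤ 2 * (Real.sinh (d / 2) * Real.exp (ur + us)) *
        Real.cosh (vsLen d ur us / 2) :=
        mul_le_mul_of_nonneg_left hc (by positivity)

/-- If the conformal factors `uj, uk` are bounded below by `C`, then the angle `αi`
tends to `0` uniformly as `ui → +∞`: for any `ε > 0` there is `C̃` (depending only on
the background lengths and `C`) such that `ui > C̃` implies `αi < ε`. -/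
theorem stmt10 (dij dik djk : ℝ) (hdij : 0 < dij) (hdik : 0 < dik) (hdjk : 0 < djk)
    (C : ℝ) (ε : ℝ) (hε : 0 < ε) :
    ∃ Ct : ℝ, ∀ ui uj uk αi : ℝ, vsAdm dij dik djk ui uj uk →
      C ≤ uj → C ≤ uk → Ct < ui →
      αi ∈ Set.Ioo 0 π →
      Real.cos αi =
        (Real.cosh (vsLen dij ui uj) * Real.cosh (vsLen dik ui uk)
            - Real.cosh (vsLen djk uj uk)) /
          (Real.sinh (vsLen dij ui uj) * Real.sinh (vsLen dik ui uk)) →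
      αi < ε := by
  set Sij := Real.sinh (dij / 2) with hSij
  set Sik := Real.sinh (dik / 2) with hSik
  set Sjk := Real.sinh (djk / 2) with hSjk
  have hSijp : 0 < Sij := Real.sinh_pos_iff.mpr (by linarith)
  have hSikp : 0 < Sik := Real.sinh_pos_iff.mpr (by linarith)
  have hSjkp : 0 < Sjk := Real.sinh_pos_iff.mpr (by linarith)
  set ε' := min ε π with hε'
  have hπ := Real.pi_pos
  have hε'pos : 0 < ε' := lt_min hε hπ
  have hε'le : ε' ≤ π := min_le_right _ _
  set δ := 1 - Real.cos ε' with hδ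
  have hδpos : 0 < δ := by
    have : Real.cos ε' < Real.cos 0 := by
      apply Real.cos_lt_cos_of_nonneg_of_le_pi le_rfl hε'le hε'pos
    simp [Real.cos_zero] at this
    simp [hδ]; linarith
  set K := Sjk ^ 2 / (2 * Sij ^ 2 * Sik ^ 2) with hK
  have hKpos : 0 < K := by positivity
  refine ⟨Real.log (K / δ) / 4, ?_⟩
  intro ui uj uk αi _hadm _hj _hk hui hmem hcos
  -- key exponential bound
  have hexp : K < δ * Real.exp ui ^ 4 := by
    have h1 : Real.log (K / δ) < 4 * ui := by linarith
    have h2 : K / δ < Real.exp (4 * ui) := by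
      calc K / δ = Real.exp (Real.log (K / δ)) := by
            rw [Real.exp_log (by positivity)]
        _ < Real.exp (4 * ui) := Real.exp_lt_exp.mpr h1
    have h3 : Real.exp (4 * ui) = Real.exp ui ^ 4 := by
      rw [show (4 : ℝ) * ui = ui + ui + ui + ui by ring]
      rw [Real.exp_add, Real.exp_add, Real.exp_add]; ring
    rw [h3] at h2
    calc K = (K / δ) * δ := by field_simp
      _ < Real.exp ui ^ 4 * δ := mul_lt_mul_of_pos_right h2 hδpos
      _ = δ * Real.exp ui ^ 4 := by ring
  set a := vsLen dij ui uj with ha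
  set b := vsLen dik ui uk with hb
  set c := vsLen djk uj uk with hc
  set A := Sij * Real.exp (ui + uj) with hA
  set B := Sik * Real.exp (ui + uk) with hB
  set Cc := Sjk * Real.exp (uj + uk) with hCc
  have hApos : 0 < A := mul_pos hSijp (Real.exp_pos _)
  have hBpos : 0 < B := mul_pos hSikp (Real.exp_pos _)
  have hsa : 2 * A ^ 2 ≤ Real.sinh a := sinh_vsLen_ge dij ui uj hdij
  have hsb : 2 * B ^ 2 ≤ Real.sinh b := sinh_vsLen_ge dik ui uk hdik
  have hsap : 0 < Real.sinh a := lt_of_lt_of_le (by positivity) hsa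
  have hsbp : 0 < Real.sinh b := lt_of_lt_of_le (by positivity) hsb
  have hcc : Real.cosh c = 2 * Cc ^ 2 + 1 := cosh_vsLen_s10 djk uj uk
  -- cosh (a - b) = cosh a cosh b - sinh a sinh b ≥ 1
  have hab : Real.cosh a * Real.cosh b - Real.sinh a * Real.sinh b = Real.cosh (a - b) := by
    rw [Real.cosh_sub]
  have hab1 : 1 ≤ Real.cosh (a - b) := Real.one_le_cosh _
  clear_value Sij Sik Sjk δ K A B Cc a b c
  -- the crucial numeric inequality: 2 * Cc^2 < δ * (4 * A^2 * B^2)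
  have hkey : 2 * Cc ^ 2 < δ * (2 * A ^ 2 * (2 * B ^ 2)) := by
    have hEj : 0 < Real.exp uj := Real.exp_pos _
    have hEk : 0 < Real.exp uk := Real.exp_pos _
    have hEi : 0 < Real.exp ui := Real.exp_pos _
    have hKey2 : Sjk ^ 2 < 2 * δ * Sij ^ 2 * Sik ^ 2 * Real.exp ui ^ 4 := by
      have h := hexp
      rw [hK] at h
      have := (div_lt_iff₀ (by positivity : (0:ℝ) < 2 * Sij ^ 2 * Sik ^ 2)).mp h
      nlinarith
    have hAe : A = Sij * (Real.exp ui * Real.exp uj) := by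
      rw [hA]; rw [Real.exp_add]
    have hBe : B = Sik * (Real.exp ui * Real.exp uk) := by
      rw [hB]; rw [Real.exp_add]
    have hCe : Cc = Sjk * (Real.exp uj * Real.exp uk) := by
      rw [hCc]; rw [Real.exp_add]
    rw [hAe, hBe, hCe]
    have hprod : 0 < Real.exp uj ^ 2 * Real.exp uk ^ 2 := by positivity
    linarith [mul_lt_mul_of_pos_right hKey2 hprod]
  -- conclude cos ε' < cos αi
  have hP : 2 * A ^ 2 * (2 * B ^ 2) ≤ Real.sinh a * Real.sinh b :=
    mul_le_mul hsa hsb (by positivity) (le_of_lt hsap)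
  have hP2 : δ * (2 * A ^ 2 * (2 * B ^ 2)) ≤ δ * (Real.sinh a * Real.sinh b) :=
    mul_le_mul_of_nonneg_left hP hδpos.le
  have hcoslt : Real.cos ε' < Real.cos αi := by
    rw [hcos]
    rw [lt_div_iff₀ (mul_pos hsap hsbp)]
    have h1 : Real.cos ε' = 1 - δ := by rw [hδ]; ring
    rw [h1]
    linarith [hP2, hab, hab1, hcc, hkey]
  -- hence αi < ε' ≤ ε
  have : αi < ε' := by
    by_contra h
    push_neg at h
    have := Real.cos_le_cos_of_nonneg_of_le_pi (le_of_lt hε'pos) (le_of_lt hmem.2) h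
    linarith
  exact lt_of_lt_of_le this (min_le_left _ _)
end

section
/- Discrete maximum principle: let f: V×[0,T) → ℝ be C¹ in t on a finite vertex set V with ∂f_i/∂t ≥ Σ_{j∼i} a_{ij}(f_j − f_i) + Φ(f_i) for all i and t, where a_{ij} ≥ 0 and Φ: ℝ → ℝ is locally Lipschitz and f_i(0) ≥ C₁ for all i. If φ solves φ' = Φ(φ), φ(0) = C₁ on [0,T), then f_i(t) ≥ φ(t) for all i ∈ V and t ∈ [0,T). -/
/-!
On `[0, t]` the values of `φ` and of all `f i` lie in a compact set on which `Φ` is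
`K`-Lipschitz. Perturb the gaps `f i - φ` by the barrier `ε e^{(K+1)(u - t)}`. At a first time
where some perturbed gap vanishes, `f i` is the smallest of the `f j`, so the coupling term
`∑ j, a i j (f j - f i)` is nonnegative, while `Φ (f i) - Φ φ ≥ -K ε e^{…}`; hence that gap has
derivative at least `ε e^{…} > 0` and cannot cross zero. Real induction keeps all perturbed gaps
nonnegative on `[0, t]`, and letting `ε → 0` gives `φ t ≤ f i t`.
-/

open Set Filter Topology

theorem HasDerivWithinAt.eventually_nhdsGT_lt_of_pos {g : ℝ → ℝ} {g' x : ℝ}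
    (hg : HasDerivWithinAt g g' (Ici x) x) (hpos : 0 < g') : ∀ᶠ z in 𝓝[>] x, g x < g z := by
  have hslope := (hasDerivWithinAt_iff_tendsto_slope' (lt_irrefl x)).1 hg.Ioi_of_Ici
  filter_upwards [hslope.eventually (eventually_gt_nhds hpos), self_mem_nhdsWithin]
    with z hz hxz
  rw [slope_def_field] at hz
  exact sub_pos.1 ((div_pos_iff_of_pos_right (sub_pos.2 hxz)).1 hz)

theorem forall_nonneg_on_Icc_of_deriv_pos_of_eq_zero {ι : Type*} [Finite ι]
    {g g' : ι → ℝ → ℝ} {a b : ℝ}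
    (hcont : ∀ j, ContinuousOn (g j) (Icc a b))
    (hderiv : ∀ j, ∀ x ∈ Ico a b, HasDerivWithinAt (g j) (g' j x) (Ici x) x)
    (ha : ∀ j, 0 ≤ g j a)
    (htouch : ∀ x ∈ Ico a b, (∀ k, 0 ≤ g k x) → ∀ j, g j x = 0 → 0 < g' j x) :
    ∀ x ∈ Icc a b, ∀ j, 0 ≤ g j x := by
  set s := {x | ∀ j, 0 ≤ g j x}
  have hclosed : IsClosed (s ∩ Icc a b) := by
    have : s ∩ Icc a b = Icc a b ∩ ⋂ j, (Icc a b ∩ g j ⁻¹' Ici 0) := by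
      ext x
      simp only [s, mem_inter_iff, mem_ofPred_eq, mem_iInter, mem_preimage, mem_Ici]
      exact ⟨fun ⟨h, hx⟩ => ⟨hx, fun j => ⟨hx, h j⟩⟩, fun ⟨hx, h⟩ => ⟨fun j => (h j).2, hx⟩⟩
    rw [this]
    exact isClosed_Icc.inter <| isClosed_iInter fun j =>
      (hcont j).preimage_isClosed_of_isClosed isClosed_Icc isClosed_Ici
  refine fun x hx => hclosed.Icc_subset_of_forall_mem_nhdsWithin ha (fun x ⟨hxs, hx⟩ => ?_) hx
  refine eventually_all.2 fun j => ?_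
  rcases (hxs j).eq_or_lt with hzero | hpos
  · filter_upwards [(hderiv j x hx).eventually_nhdsGT_lt_of_pos (htouch x hx hxs j hzero.symm)]
      with z hz
    exact hzero ▸ hz.le
  · filter_upwards [((hderiv j x hx).continuousWithinAt.mono Ioi_subset_Ici_self).eventually
      (eventually_gt_nhds hpos)] with z hz
    exact hz.le

section Comparison

variable {ι : Type*} [Fintype ι] {t₀ t₁ : ℝ} {K : NNReal} {S : Set ℝ}
  {f f' : ι → ℝ → ℝ} {w : ι → ι → ℝ → ℝ} {Φ φ : ℝ → ℝ}

theorem hasDerivAt_mul_exp_mul_sub (ε L c u : ℝ) :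
    HasDerivAt (fun u => ε * Real.exp (L * (u - c))) (L * (ε * Real.exp (L * (u - c)))) u :=
  ((((hasDerivAt_id u).sub_const c).const_mul L).exp.const_mul ε).congr_deriv (by simp; ring)

theorem sub_add_barrier_nonneg
    (hw : ∀ i j, ∀ u ∈ Icc t₀ t₁, 0 ≤ w i j u)
    (hΦ : LipschitzOnWith K Φ S)
    (hfS : ∀ i, ∀ u ∈ Icc t₀ t₁, f i u ∈ S) (hφS : ∀ u ∈ Icc t₀ t₁, φ u ∈ S)
    (hf : ∀ i, ∀ u ∈ Icc t₀ t₁, HasDerivAt (f i) (f' i u) u)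
    (hineq : ∀ i, ∀ u ∈ Icc t₀ t₁, (∑ j, w i j u * (f j u - f i u)) + Φ (f i u) ≤ f' i u)
    (hφ : ∀ u ∈ Icc t₀ t₁, HasDerivAt φ (Φ (φ u)) u)
    (hinit : ∀ i, φ t₀ ≤ f i t₀) {ε : ℝ} (hε : 0 < ε) :
    ∀ u ∈ Icc t₀ t₁, ∀ i, 0 ≤ f i u - φ u + ε * Real.exp ((K + 1) * (u - t₁)) := by
  set E : ℝ → ℝ := fun u => ε * Real.exp ((K + 1) * (u - t₁))
  have hE : ∀ u, 0 < E u := fun u => by positivity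
  have hg : ∀ i, ∀ u ∈ Icc t₀ t₁, HasDerivAt (fun u => f i u - φ u + E u)
      (f' i u - Φ (φ u) + (K + 1) * E u) u := fun i u hu =>
    ((hf i u hu).sub (hφ u hu)).add (hasDerivAt_mul_exp_mul_sub ε _ t₁ u)
  refine forall_nonneg_on_Icc_of_deriv_pos_of_eq_zero
    (fun i u hu => (hg i u hu).continuousAt.continuousWithinAt)
    (fun i u hu => (hg i u (Ico_subset_Icc_self hu)).hasDerivWithinAt)
    (fun i => by linarith [hinit i, hE t₀]) ?_
  intro u hu hnonneg i (hzero : f i u - φ u + E u = 0)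
  replace hu := Ico_subset_Icc_self hu
  have hsum : 0 ≤ ∑ j, w i j u * (f j u - f i u) :=
    Finset.sum_nonneg fun j _ => mul_nonneg (hw i j u hu) (by linarith [hnonneg j])
  have hLip : Φ (φ u) - Φ (f i u) ≤ K * E u := by
    have h := hΦ.dist_le_mul _ (hφS u hu) _ (hfS i u hu)
    rw [Real.dist_eq, Real.dist_eq, show φ u - f i u = E u by linarith, abs_of_pos (hE u)] at h
    exact (le_abs_self _).trans h
  nlinarith [hineq i u hu, hE u]

theorem le_of_hasDerivAt_ge_laplacian_add (ht : t₀ ≤ t₁)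
    (hw : ∀ i j, ∀ u ∈ Icc t₀ t₁, 0 ≤ w i j u)
    (hΦ : LipschitzOnWith K Φ S)
    (hfS : ∀ i, ∀ u ∈ Icc t₀ t₁, f i u ∈ S) (hφS : ∀ u ∈ Icc t₀ t₁, φ u ∈ S)
    (hf : ∀ i, ∀ u ∈ Icc t₀ t₁, HasDerivAt (f i) (f' i u) u)
    (hineq : ∀ i, ∀ u ∈ Icc t₀ t₁, (∑ j, w i j u * (f j u - f i u)) + Φ (f i u) ≤ f' i u)
    (hφ : ∀ u ∈ Icc t₀ t₁, HasDerivAt φ (Φ (φ u)) u)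
    (hinit : ∀ i, φ t₀ ≤ f i t₀) (i : ι) : φ t₁ ≤ f i t₁ :=
  le_of_forall_pos_le_add fun ε hε => by
    have h := sub_add_barrier_nonneg hw hΦ hfS hφS hf hineq hφ hinit hε t₁ (right_mem_Icc.2 ht) i
    rw [sub_self, mul_zero, Real.exp_zero, mul_one] at h
    linarith

end Comparison

theorem stmt13_general {ι : Type*} [Fintype ι] (T : ℝ)
    (f : ι → ℝ → ℝ) (f' : ι → ℝ → ℝ) (a : ι → ι → ℝ → ℝ) (Φ : ℝ → ℝ)
    (ha : ∀ i j, ∀ t ∈ Set.Ico (0 : ℝ) T, 0 ≤ a i j t)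
    (hΦ : LocallyLipschitz Φ)
    (hderiv : ∀ i, ∀ t ∈ Set.Ico (0 : ℝ) T, HasDerivAt (f i) (f' i t) t)
    (hineq : ∀ i, ∀ t ∈ Set.Ico (0 : ℝ) T,
      (∑ j, a i j t * (f j t - f i t)) + Φ (f i t) ≤ f' i t)
    (C₁ : ℝ) (hinit : ∀ i, C₁ ≤ f i 0)
    (φ : ℝ → ℝ) (hφderiv : ∀ t ∈ Set.Ico (0 : ℝ) T, HasDerivAt φ (Φ (φ t)) t)
    (hφ0 : φ 0 = C₁) :
    ∀ i, ∀ t ∈ Set.Ico (0 : ℝ) T, φ t ≤ f i t := by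
  intro i t ⟨ht0, htT⟩
  have hsub : Icc 0 t ⊆ Ico 0 T := Icc_subset_Ico_right htT
  set S := φ '' Icc 0 t ∪ ⋃ j, f j '' Icc 0 t
  have hS : IsCompact S :=
    (isCompact_Icc.image_of_continuousOn fun u hu =>
        (hφderiv u (hsub hu)).continuousAt.continuousWithinAt).union <|
      isCompact_iUnion fun j => isCompact_Icc.image_of_continuousOn fun u hu =>
        (hderiv j u (hsub hu)).continuousAt.continuousWithinAt
  obtain ⟨K, hK⟩ := hΦ.locallyLipschitzOn.exists_lipschitzOnWith_of_compact hS
  exact le_of_hasDerivAt_ge_laplacian_add ht0 (fun i j u hu => ha i j u (hsub hu)) hK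
    (fun j u hu => Or.inr (mem_iUnion.2 ⟨j, mem_image_of_mem _ hu⟩))
    (fun u hu => Or.inl (mem_image_of_mem _ hu)) (fun j u hu => hderiv j u (hsub hu))
    (fun j u hu => hineq j u (hsub hu)) (fun u hu => hφderiv u (hsub hu))
    (fun j => hφ0 ▸ hinit j) i

/-- Discrete maximum principle: if `∂f_i/∂t ≥ Σ_j a_{ij}(t)(f_j − f_i) + Φ(f_i)` with
nonnegative coefficients `a_{ij}(t) ≥ 0`, `Φ` locally Lipschitz, `f_i(0) ≥ C₁` for
all `i`, and `φ` solves `φ' = Φ(φ)`, `φ(0) = C₁` on `[0,T)`, then `f_i(t) ≥ φ(t)` for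
all `i` and `t ∈ [0,T)`. -/
theorem stmt13 {ι : Type*} [Fintype ι] (T : ℝ) (hT : 0 < T)
    (f : ι → ℝ → ℝ) (f' : ι → ℝ → ℝ) (a : ι → ι → ℝ → ℝ) (Φ : ℝ → ℝ)
    (ha : ∀ i j, ∀ t ∈ Set.Ico (0 : ℝ) T, 0 ≤ a i j t)
    (hΦ : LocallyLipschitz Φ)
    (hderiv : ∀ i, ∀ t ∈ Set.Ico (0 : ℝ) T, HasDerivAt (f i) (f' i t) t)
    (hineq : ∀ i, ∀ t ∈ Set.Ico (0 : ℝ) T,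
      (∑ j, a i j t * (f j t - f i t)) + Φ (f i t) ≤ f' i t)
    (C₁ : ℝ) (hinit : ∀ i, C₁ ≤ f i 0)
    (φ : ℝ → ℝ) (hφderiv : ∀ t ∈ Set.Ico (0 : ℝ) T, HasDerivAt φ (Φ (φ t)) t)
    (hφ0 : φ 0 = C₁) :
    ∀ i, ∀ t ∈ Set.Ico (0 : ℝ) T, φ t ≤ f i t :=
  stmt13_general T f f' a Φ ha hΦ hderiv hineq C₁ hinit φ hφderiv hφ0
end
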